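/- arXiv:1602.02577 — 2 statements merged into one kernel-verified Lean document; each statement's English description precedes it below -/
import Mathlib

section
/- Among the 24 transpositions and inversions T_n, I_n (n ∈ ℤ/12), regarded as bijections of Triads, the only ones that preserve the set Hex (i.e. map Hex onto Hex) are exactly T₀, T₄, T₈, I₁, I₅, and I₉. -/
/-- Pitch classes: the integers mod 12. -/
abbrev PC := ZMod 12

/-- Ordered triples of pitch classes. -/
abbrev T3 := PC × PC × PC

/-- The set of consonant triads: major triads `⟨x, x+4, x+7⟩` and
minor triads `⟨x+7, x+3, x⟩`. -/
def Triads : Set T3 :=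
  {t | (∃ x : PC, t = (x, x + 4, x + 7)) ∨ (∃ x : PC, t = (x + 7, x + 3, x))}

instance : DecidablePred (· ∈ Triads) := fun t =>
  decidable_of_iff ((∃ x : PC, t = (x, x + 4, x + 7)) ∨ (∃ x : PC, t = (x + 7, x + 3, x)))
    Iff.rfl

/-- Transposition `T_n`, componentwise on triples. -/
def Tfun (n : PC) (t : T3) : T3 := (t.1 + n, t.2.1 + n, t.2.2 + n)

/-- Inversion `I_n`, componentwise on triples. -/
def Ifun (n : PC) (t : T3) : T3 := (-t.1 + n, -t.2.1 + n, -t.2.2 + n)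

/-- The parallel transformation `P⟨x₁,x₂,x₃⟩ = I_{x₁+x₃}⟨x₁,x₂,x₃⟩`. -/
def Pfun (t : T3) : T3 := Ifun (t.1 + t.2.2) t

/-- The leading-tone-exchange `L⟨x₁,x₂,x₃⟩ = I_{x₂+x₃}⟨x₁,x₂,x₃⟩`. -/
def Lfun (t : T3) : T3 := Ifun (t.2.1 + t.2.2) t

lemma Tfun_mem (n : PC) (t : T3) (h : t ∈ Triads) : Tfun n t ∈ Triads := by
  rcases h with ⟨x, rfl⟩ | ⟨x, rfl⟩
  · exact Or.inl ⟨x + n, by simp only [Tfun, Prod.mk.injEq]; exact ⟨trivial, by ring, by ring⟩⟩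
  · exact Or.inr ⟨x + n, by simp only [Tfun, Prod.mk.injEq]; exact ⟨by ring, by ring, trivial⟩⟩

lemma Ifun_mem (n : PC) (t : T3) (h : t ∈ Triads) : Ifun n t ∈ Triads := by
  rcases h with ⟨x, rfl⟩ | ⟨x, rfl⟩
  · exact Or.inr ⟨-x + n - 7,
      by simp only [Ifun, Prod.mk.injEq]; exact ⟨by ring, by ring, by ring⟩⟩
  · exact Or.inl ⟨-x + n - 7,
      by simp only [Ifun, Prod.mk.injEq]; exact ⟨by ring, by ring, by ring⟩⟩

lemma Pfun_mem (t : T3) (h : t ∈ Triads) : Pfun t ∈ Triads := by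
  rcases h with ⟨x, rfl⟩ | ⟨x, rfl⟩
  · exact Or.inr ⟨x,
      by simp only [Pfun, Ifun, Prod.mk.injEq]; exact ⟨by ring, by ring, by ring⟩⟩
  · exact Or.inl ⟨x,
      by simp only [Pfun, Ifun, Prod.mk.injEq]; exact ⟨by ring, by ring, by ring⟩⟩

lemma Lfun_mem (t : T3) (h : t ∈ Triads) : Lfun t ∈ Triads := by
  rcases h with ⟨x, rfl⟩ | ⟨x, rfl⟩
  · exact Or.inr ⟨x + 4,
      by simp only [Lfun, Ifun, Prod.mk.injEq]; exact ⟨by ring, by ring, by ring⟩⟩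
  · exact Or.inl ⟨x - 4,
      by simp only [Lfun, Ifun, Prod.mk.injEq]; exact ⟨by ring, by ring, by ring⟩⟩

lemma Tfun_neg (n : PC) (t : T3) : Tfun (-n) (Tfun n t) = t := by
  simp only [Tfun]; exact Prod.ext (by ring) (Prod.ext (by ring) (by ring))

lemma Ifun_invol (n : PC) (t : T3) : Ifun n (Ifun n t) = t := by
  simp only [Ifun]; exact Prod.ext (by ring) (Prod.ext (by ring) (by ring))

lemma Pfun_invol (t : T3) : Pfun (Pfun t) = t := by
  simp only [Pfun, Ifun]; exact Prod.ext (by ring) (Prod.ext (by ring) (by ring))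

lemma Lfun_invol (t : T3) : Lfun (Lfun t) = t := by
  simp only [Lfun, Ifun]; exact Prod.ext (by ring) (Prod.ext (by ring) (by ring))

/-- Transposition `T_n` as a bijection of the set of consonant triads. -/
def Tperm (n : PC) : Equiv.Perm ↥Triads where
  toFun t := ⟨Tfun n t, Tfun_mem n t t.2⟩
  invFun t := ⟨Tfun (-n) t, Tfun_mem (-n) t t.2⟩
  left_inv t := Subtype.ext (Tfun_neg n t)
  right_inv t := Subtype.ext (by simpa using Tfun_neg (-n) t)

/-- Inversion `I_n` as a bijection of the set of consonant triads. -/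
def Iperm (n : PC) : Equiv.Perm ↥Triads :=
  Function.Involutive.toPerm (fun t => ⟨Ifun n t, Ifun_mem n t t.2⟩)
    (fun t => Subtype.ext (Ifun_invol n t))

/-- `P` as a bijection of the set of consonant triads. -/
def Pperm : Equiv.Perm ↥Triads :=
  Function.Involutive.toPerm (fun t => ⟨Pfun t, Pfun_mem t t.2⟩)
    (fun t => Subtype.ext (Pfun_invol t))

/-- `L` as a bijection of the set of consonant triads. -/
def Lperm : Equiv.Perm ↥Triads :=
  Function.Involutive.toPerm (fun t => ⟨Lfun t, Lfun_mem t t.2⟩)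
    (fun t => Subtype.ext (Lfun_invol t))

/-- The hexatonic cycle `Hex`: the six triads `E♭, e♭, B, b, G, g`. -/
def HexT : Set T3 :=
  {(3, 7, 10), (10, 6, 3), (11, 3, 6), (6, 2, 11), (7, 11, 2), (2, 10, 7)}

/-- The hexatonic cycle as a set of elements of `Triads`. -/
def HexSub : Set ↥Triads := {t | (t : T3) ∈ HexT}

lemma hexT_sub : ∀ t ∈ HexT, t ∈ Triads := by
  intro t ht
  simp only [HexT, Set.mem_insert_iff, Set.mem_singleton_iff] at ht
  rcases ht with rfl|rfl|rfl|rfl|rfl|rfl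
  · exact Or.inl ⟨3, by decide⟩
  · exact Or.inr ⟨3, by decide⟩
  · exact Or.inl ⟨11, by decide⟩
  · exact Or.inr ⟨11, by decide⟩
  · exact Or.inl ⟨7, by decide⟩
  · exact Or.inr ⟨7, by decide⟩

lemma image_iff (g : Equiv.Perm ↥Triads) (G G' : T3 → T3)
    (hG : ∀ t : ↥Triads, (↑(g t) : T3) = G ↑t)
    (hG' : ∀ t : ↥Triads, (↑(g.symm t) : T3) = G' ↑t) :
    ((⇑g '' HexSub = HexSub) ↔
      ((∀ t ∈ HexT, G t ∈ HexT) ∧ (∀ t ∈ HexT, G' t ∈ HexT))) := by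
  constructor
  · intro h
    constructor
    · intro t ht
      have htr := hexT_sub t ht
      have hmem : (⟨t, htr⟩ : ↥Triads) ∈ HexSub := ht
      have : g ⟨t, htr⟩ ∈ HexSub := h ▸ Set.mem_image_of_mem _ hmem
      have h2 : (↑(g ⟨t, htr⟩) : T3) ∈ HexT := this
      rwa [hG] at h2
    · intro t ht
      have htr := hexT_sub t ht
      have hmem : (⟨t, htr⟩ : ↥Triads) ∈ HexSub := ht
      rw [← h] at hmem
      obtain ⟨s, hs, hst⟩ := hmem
      have : g.symm ⟨t, htr⟩ = s := by rw [← hst]; exact g.symm_apply_apply s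
      have h2 : (↑(g.symm ⟨t, htr⟩) : T3) ∈ HexT := by rw [this]; exact hs
      rwa [hG'] at h2
  · rintro ⟨h1, h2⟩
    ext t
    constructor
    · rintro ⟨s, hs, rfl⟩
      show (↑(g s) : T3) ∈ HexT
      rw [hG]; exact h1 _ hs
    · intro ht
      refine ⟨g.symm t, ?_, g.apply_symm_apply t⟩
      show (↑(g.symm t) : T3) ∈ HexT
      rw [hG']; exact h2 _ ht

lemma hexT_mem_iff (t : T3) : t ∈ HexT ↔
    (t = (3, 7, 10) ∨ t = (10, 6, 3) ∨ t = (11, 3, 6) ∨ t = (6, 2, 11) ∨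
      t = (7, 11, 2) ∨ t = (2, 10, 7)) := by
  simp [HexT, Set.mem_insert_iff, Set.mem_singleton_iff]

lemma ball_hexT (P : T3 → Prop) : (∀ t ∈ HexT, P t) ↔
    (P (3, 7, 10) ∧ P (10, 6, 3) ∧ P (11, 3, 6) ∧ P (6, 2, 11) ∧
      P (7, 11, 2) ∧ P (2, 10, 7)) := by
  constructor
  · intro h
    exact ⟨h _ (by rw [hexT_mem_iff]; tauto), h _ (by rw [hexT_mem_iff]; tauto),
      h _ (by rw [hexT_mem_iff]; tauto), h _ (by rw [hexT_mem_iff]; tauto),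
      h _ (by rw [hexT_mem_iff]; tauto), h _ (by rw [hexT_mem_iff]; tauto)⟩
  · rintro ⟨h1, h2, h3, h4, h5, h6⟩ t ht
    rw [hexT_mem_iff] at ht
    rcases ht with rfl|rfl|rfl|rfl|rfl|rfl <;> assumption

set_option maxRecDepth 100000
set_option synthInstance.maxHeartbeats 1000000
set_option synthInstance.maxSize 2000
set_option maxHeartbeats 1000000

/-- Among the 24 transpositions and inversions, regarded as bijections of `Triads`,
the only ones mapping `Hex` onto `Hex` are exactly `T₀, T₄, T₈, I₁, I₅, I₉`. -/
theorem TI_preserving_Hex (n : PC) :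
    ((⇑(Tperm n)) '' HexSub = HexSub ↔ (n = 0 ∨ n = 4 ∨ n = 8)) ∧
    ((⇑(Iperm n)) '' HexSub = HexSub ↔ (n = 1 ∨ n = 5 ∨ n = 9)) := by
  constructor
  · rw [image_iff (Tperm n) (Tfun n) (Tfun (-n)) (fun t => rfl) (fun t => rfl)]
    simp only [ball_hexT]
    simp only [hexT_mem_iff, Tfun]
    revert n; decide
  · rw [image_iff (Iperm n) (Ifun n) (Ifun n) (fun t => rfl) (fun t => rfl)]
    simp only [ball_hexT]
    simp only [hexT_mem_iff, Ifun]
    revert n; decide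
end

section
/- The composite L∘P, as a bijection of Triads, satisfies (L∘P)³ = Id_{Triads}. -/
lemma LPfun (t : T3) (h : t ∈ Triads) : Lfun (Pfun (Lfun (Pfun (Lfun (Pfun t))))) = t := by
  rcases h with ⟨x, rfl⟩ | ⟨x, rfl⟩ <;>
    · simp only [Pfun, Lfun, Ifun]
      have h12 : (12 : PC) = 0 := by decide
      refine Prod.ext ?_ (Prod.ext ?_ ?_) <;>
        (first | ring1 | linear_combination h12 | linear_combination -h12)

/-- The composite `L ∘ P`, as a bijection of `Triads`, satisfies `(L ∘ P)³ = Id`. -/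
theorem LP_cubed_eq_one : (Lperm * Pperm) ^ 3 = 1 := by
  apply Equiv.ext; intro t; apply Subtype.ext
  simp only [pow_succ, pow_zero, one_mul, Equiv.Perm.mul_apply, Equiv.Perm.one_apply,
    Lperm, Pperm, Function.Involutive.coe_toPerm]
  exact LPfun t t.2
end
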